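/- arXiv:1610.07260 — 4 statements merged into one kernel-verified Lean document; each statement's English description precedes it below -/
import Mathlib

section
/- Let p be a prime with p ≡ 3 (mod 4) and let ε ∈ {1, −1}. Then the proportion #{γ ∈ SL₂(F_p) : tr(γᵀγ) = 2ε} / |SL₂(F_p)| equals 1/(p(p−1)). -/
open Matrix

/-- `trF γ = tr(γᵀ γ)` for `γ` in `SL₂(R)`. -/
def trF {R : Type*} [CommRing R] (γ : Matrix.SpecialLinearGroup (Fin 2) R) : R :=
  Matrix.trace ((γ : Matrix (Fin 2) (Fin 2) R)ᵀ * (γ : Matrix (Fin 2) (Fin 2) R))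

/-!
For `γ = ((a, b), (c, d))` of determinant one and `ε² = 1` we have
`tr(γᵀγ) - 2ε = (a - εd)² + (b + εc)²`. As `-1` is not a square when `q ≡ 3 (mod 4)`, a sum of
two squares vanishes only trivially, so `tr(γᵀγ) = 2ε` forces `γ = ((a, b), (-εb, εa))` with
`a² + b² = ε`. The conic `x² + y² = ε` has `q + 1` points: every element is a sum of two squares,
so multiplication by a suitable `c + di` identifies all the nonzero fibres of `x² + y²`, while the
zero fibre is a single point. Dividing by `|SL₂(F_q)| = q(q² - 1)` gives `1 / (q(q - 1))`.
-/

open Polynomial in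
theorem FiniteField.exists_sq_add_sq_eq {K : Type*} [Field K] [Fintype K]
    (hK : Fintype.card K % 2 = 1) (x : K) : ∃ a b : K, a ^ 2 + b ^ 2 = x := by
  obtain ⟨a, b, hab⟩ := FiniteField.exists_root_sum_quadratic (f := X ^ 2) (g := X ^ 2 - C x)
    (degree_X_pow 2) (degree_X_pow_sub_C two_pos x) hK
  refine ⟨a, b, ?_⟩
  simp only [eval_pow, eval_X, eval_sub, eval_C] at hab
  linear_combination hab

section SumOfTwoSquares

variable {K : Type*} [Field K]

theorem eq_zero_and_eq_zero_of_sq_add_sq_eq_zero (h : ¬IsSquare (-1 : K)) {a b : K}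
    (hab : a ^ 2 + b ^ 2 = 0) : a = 0 ∧ b = 0 := by
  by_cases hb : b = 0
  · subst hb
    exact ⟨by simpa using hab, rfl⟩
  · exact absurd ⟨a / b, by field_simp; linear_combination -hab⟩ h

theorem card_sq_add_sq_eq_mul {c d : K} (hu : c ^ 2 + d ^ 2 ≠ 0) (s : K) :
    Nat.card {x : K × K // x.1 ^ 2 + x.2 ^ 2 = s} =
      Nat.card {x : K × K // x.1 ^ 2 + x.2 ^ 2 = s * (c ^ 2 + d ^ 2)} := by
  refine Nat.card_congr (Equiv.subtypeEquiv
    { toFun := fun x => (x.1 * c - x.2 * d, x.1 * d + x.2 * c)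
      invFun := fun x => ((x.1 * c + x.2 * d) / (c ^ 2 + d ^ 2),
        (x.2 * c - x.1 * d) / (c ^ 2 + d ^ 2))
      left_inv := fun x => by ext <;> field_simp <;> ring
      right_inv := fun x => by ext <;> field_simp <;> ring } fun x => ?_)
  simp only [Equiv.coe_fn_mk, ← sq_add_sq_mul_sq_add_sq, mul_left_inj' hu]

variable [Fintype K]

theorem card_sq_add_sq_eq_of_ne_zero (hK : Fintype.card K % 4 = 3) {s : K} (hs : s ≠ 0) :
    Nat.card {x : K × K // x.1 ^ 2 + x.2 ^ 2 = s} = Fintype.card K + 1 := by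
  classical
  set q := Fintype.card K
  set N := Nat.card {x : K × K // x.1 ^ 2 + x.2 ^ 2 = 1}
  have hfiber : ∀ t ≠ 0, Nat.card {x : K × K // x.1 ^ 2 + x.2 ^ 2 = t} = N := by
    intro t ht
    obtain ⟨c, d, hcd⟩ := FiniteField.exists_sq_add_sq_eq (by omega) t
    have := card_sq_add_sq_eq_mul (hcd ▸ ht) 1
    rwa [one_mul, hcd, eq_comm] at this
  have hzero : Nat.card {x : K × K // x.1 ^ 2 + x.2 ^ 2 = 0} = 1 := by
    have hneg : ¬IsSquare (-1 : K) := FiniteField.isSquare_neg_one_iff.not.mpr (not_not.mpr hK)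
    refine Nat.card_eq_one_iff_exists.mpr ⟨⟨0, by simp⟩, fun x => Subtype.ext ?_⟩
    obtain ⟨ha, hb⟩ := eq_zero_and_eq_zero_of_sq_add_sq_eq_zero hneg x.2
    exact Prod.ext ha hb
  have htotal : q ^ 2 = 1 + (q - 1) * N := calc
    q ^ 2 = Nat.card (K × K) := by simp [q, sq]
    _ = ∑ t, Nat.card {x : K × K // x.1 ^ 2 + x.2 ^ 2 = t} := by
      rw [← Nat.card_sigma, Nat.card_congr (Equiv.sigmaFiberEquiv _)]
    _ = 1 + (q - 1) * N := by
      rw [← Finset.add_sum_erase _ _ (Finset.mem_univ 0), hzero,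
        Finset.sum_congr rfl fun t ht => hfiber t (Finset.ne_of_mem_erase ht), Finset.sum_const,
        Finset.card_erase_of_mem (Finset.mem_univ 0), Finset.card_univ, smul_eq_mul]
  have hq : 1 < q := Fintype.one_lt_card
  rw [hfiber s hs]
  refine Nat.eq_of_mul_eq_mul_left (show 0 < q - 1 by omega) ?_
  zify [hq.le] at htotal ⊢
  linear_combination -htotal

end SumOfTwoSquares

theorem Matrix.card_GL_eq_card_units_mul_card_SL {n R : Type*} [Fintype n] [DecidableEq n]
    [Nonempty n] [CommRing R] :
    Nat.card (GL n R) = Nat.card Rˣ * Nat.card (SpecialLinearGroup n R) := by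
  let e : SpecialLinearGroup n R ≃ (GeneralLinearGroup.det : GL n R →* Rˣ).ker :=
    { toFun := fun g => ⟨SpecialLinearGroup.toGL g, by simp [MonoidHom.mem_ker]⟩
      invFun := fun g => ⟨g.1, by simpa using congrArg Units.val (MonoidHom.mem_ker.mp g.2)⟩
      left_inv := fun _ => rfl
      right_inv := fun _ => Subtype.ext (Units.ext rfl) }
  rw [Subgroup.card_eq_card_quotient_mul_card_subgroup GeneralLinearGroup.det.ker,
    Nat.card_congr (QuotientGroup.quotientKerEquivOfSurjective _
      GeneralLinearGroup.det_surjective).toEquiv, Nat.card_congr e]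

theorem Matrix.card_SL_two {K : Type*} [Field K] [Fintype K] :
    Nat.card (SpecialLinearGroup (Fin 2) K) = Fintype.card K * (Fintype.card K ^ 2 - 1) := by
  classical
  have hGL := card_GL_field (𝔽 := K) 2
  rw [card_GL_eq_card_units_mul_card_SL, Nat.card_eq_fintype_card, Fintype.card_units,
    Fin.prod_univ_two, Fin.val_zero, Fin.val_one, pow_zero, pow_one] at hGL
  have hq : 1 < Fintype.card K := Fintype.one_lt_card
  refine Nat.eq_of_mul_eq_mul_left (show 0 < Fintype.card K - 1 by omega) ?_
  rw [hGL]
  zify [hq.le, Nat.one_le_pow 2 (Fintype.card K) (by omega), Nat.le_self_pow two_ne_zero (Fintype.card K)]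
  ring

theorem trF_eq_sum_sq {R : Type*} [CommRing R] (γ : SpecialLinearGroup (Fin 2) R) :
    trF γ = γ 0 0 ^ 2 + γ 0 1 ^ 2 + γ 1 0 ^ 2 + γ 1 1 ^ 2 := by
  simp only [trF, trace_fin_two, mul_apply, Fin.sum_univ_two, transpose_apply]
  ring

theorem trF_sub_two_mul_eq_sq_add_sq {R : Type*} [CommRing R] {ε : R} (hε : ε ^ 2 = 1)
    (γ : SpecialLinearGroup (Fin 2) R) :
    trF γ - 2 * ε = (γ 0 0 - ε * γ 1 1) ^ 2 + (γ 0 1 + ε * γ 1 0) ^ 2 := by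
  have hdet : γ 0 0 * γ 1 1 - γ 0 1 * γ 1 0 = 1 := by
    rw [← det_fin_two]; exact γ.det_coe
  rw [trF_eq_sum_sq]
  linear_combination 2 * ε * hdet - (γ 1 0 ^ 2 + γ 1 1 ^ 2) * hε

section Field

variable {K : Type*} [Field K] {ε : K}

theorem trF_eq_two_mul_iff (h : ¬IsSquare (-1 : K)) (hε : ε ^ 2 = 1)
    (γ : SpecialLinearGroup (Fin 2) K) :
    trF γ = 2 * ε ↔ γ 1 1 = ε * γ 0 0 ∧ γ 1 0 = -(ε * γ 0 1) := by
  rw [← sub_eq_zero, trF_sub_two_mul_eq_sq_add_sq hε]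
  constructor
  · intro hγ
    obtain ⟨h₁, h₂⟩ := eq_zero_and_eq_zero_of_sq_add_sq_eq_zero h hγ
    constructor
    · linear_combination -ε * h₁ - γ 1 1 * hε
    · linear_combination ε * h₂ - γ 1 0 * hε
  · rintro ⟨h₁, h₂⟩
    rw [h₁, h₂]
    linear_combination (γ 0 0 ^ 2 + γ 0 1 ^ 2) * (ε ^ 2 - 1) * hε

def trFEqTwoMulEquiv (h : ¬IsSquare (-1 : K)) (hε : ε ^ 2 = 1) :
    {γ : SpecialLinearGroup (Fin 2) K // trF γ = 2 * ε} ≃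
      {x : K × K // x.1 ^ 2 + x.2 ^ 2 = ε} where
  toFun γ := ⟨(γ.1 0 0, γ.1 0 1), by
    obtain ⟨h₁, h₂⟩ := (trF_eq_two_mul_iff h hε γ.1).mp γ.2
    have hdet := γ.1.det_coe
    rw [det_fin_two, h₁, h₂] at hdet
    linear_combination ε * hdet - (γ.1 0 0 ^ 2 + γ.1 0 1 ^ 2) * hε⟩
  invFun x := ⟨⟨!![x.1.1, x.1.2; -(ε * x.1.2), ε * x.1.1], by
    rw [det_fin_two_of]
    linear_combination ε * x.2 + hε⟩, (trF_eq_two_mul_iff h hε _).mpr ⟨rfl, rfl⟩⟩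
  left_inv γ := by
    obtain ⟨h₁, h₂⟩ := (trF_eq_two_mul_iff h hε γ.1).mp γ.2
    ext i j
    fin_cases i <;> fin_cases j <;> simp [h₁, h₂]
  right_inv x := rfl

variable [Fintype K]

theorem card_trF_eq_two_mul (hK : Fintype.card K % 4 = 3) (hε : ε ^ 2 = 1) :
    Nat.card {γ : SpecialLinearGroup (Fin 2) K // trF γ = 2 * ε} = Fintype.card K + 1 := by
  have h : ¬IsSquare (-1 : K) := FiniteField.isSquare_neg_one_iff.not.mpr (not_not.mpr hK)
  rw [Nat.card_congr (trFEqTwoMulEquiv h hε),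
    card_sq_add_sq_eq_of_ne_zero hK (left_ne_zero_of_mul_eq_one (pow_two ε ▸ hε))]

end Field

theorem stmt_5_general (p : ℕ) (hp3 : p % 4 = 3) [Fact p.Prime]
    (ε : ZMod p) (hε : ε = 1 ∨ ε = -1) :
    ((Nat.card {γ : Matrix.SpecialLinearGroup (Fin 2) (ZMod p) // trF γ = 2 * ε} : ℚ)
      / (Nat.card (Matrix.SpecialLinearGroup (Fin 2) (ZMod p)) : ℚ)
      = 1 / (p * (p - 1))) := by
  have hε2 : ε ^ 2 = 1 := by rcases hε with rfl | rfl <;> norm_num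
  rw [card_trF_eq_two_mul (by rwa [ZMod.card]) hε2, card_SL_two, ZMod.card]
  have hp : (1 : ℚ) < p := by exact_mod_cast (Fact.out : p.Prime).one_lt
  push_cast [Nat.one_le_pow 2 p (by omega)]
  rw [div_eq_div_iff (by nlinarith) (by nlinarith)]
  ring

theorem stmt_5 (p : ℕ) (hp : p.Prime) (hp3 : p % 4 = 3) [Fact p.Prime]
    (ε : ZMod p) (hε : ε = 1 ∨ ε = -1) :
    ((Nat.card {γ : Matrix.SpecialLinearGroup (Fin 2) (ZMod p) // trF γ = 2 * ε} : ℚ)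
      / (Nat.card (Matrix.SpecialLinearGroup (Fin 2) (ZMod p)) : ℚ)
      = 1 / (p * (p - 1))) :=
  stmt_5_general p hp3 ε hε
end

section
/- For any odd prime p and any ε ∈ {1,−1}, the count #{γ ∈ SL₂(F_p) : tr(γᵀγ) = 2ε} is independent of the choice of sign ε. -/
open Matrix

/-!
If `g ∈ SL₂(R)` satisfies `gᵀ g = -1`, then `tr((gγ)ᵀ gγ) = tr(γᵀ (gᵀ g) γ) = -tr(γᵀ γ)`, so left
multiplication by `g` is a bijection between the level sets `trF = c` and `trF = -c`. Over `𝔽_p`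
such a `g` is the symmetric matrix `[[x, y], [y, -x]]` with `x² + y² = -1`.
-/

namespace Matrix.SpecialLinearGroup

variable {R : Type*} [CommRing R]

lemma exists_transpose_mul_self_eq_neg_one_of_sq_add_sq {x y : R} (hxy : x ^ 2 + y ^ 2 = -1) :
    ∃ g : SpecialLinearGroup (Fin 2) R, (g : Matrix (Fin 2) (Fin 2) R)ᵀ * g = -1 := by
  have hdet : (!![x, y; y, -x] : Matrix (Fin 2) (Fin 2) R).det = 1 := by
    rw [det_fin_two_of]
    linear_combination -hxy
  refine ⟨⟨_, hdet⟩, ?_⟩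
  ext i j
  fin_cases i <;> fin_cases j <;> simp [mul_apply, Fin.sum_univ_two, ← hxy] <;> ring

lemma trF_mul_of_transpose_mul_self_eq_neg_one {g : SpecialLinearGroup (Fin 2) R}
    (hg : (g : Matrix (Fin 2) (Fin 2) R)ᵀ * g = -1) (γ : SpecialLinearGroup (Fin 2) R) :
    trF (g * γ) = -trF γ := by
  simp only [trF, coe_mul, transpose_mul]
  rw [Matrix.mul_assoc, ← Matrix.mul_assoc _ _ (γ : Matrix (Fin 2) (Fin 2) R), hg]
  simp [trace_neg]

lemma card_trF_eq_neg_of_transpose_mul_self_eq_neg_one {g : SpecialLinearGroup (Fin 2) R}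
    (hg : (g : Matrix (Fin 2) (Fin 2) R)ᵀ * g = -1) (c : R) :
    Nat.card {γ : SpecialLinearGroup (Fin 2) R // trF γ = c}
      = Nat.card {γ : SpecialLinearGroup (Fin 2) R // trF γ = -c} :=
  Nat.card_congr <| (Equiv.mulLeft g).subtypeEquiv fun γ => by
    simp [trF_mul_of_transpose_mul_self_eq_neg_one hg]

end Matrix.SpecialLinearGroup

open Matrix.SpecialLinearGroup in
lemma ZMod.card_trF_eq_neg (p : ℕ) [Fact p.Prime] (c : ZMod p) :
    Nat.card {γ : SpecialLinearGroup (Fin 2) (ZMod p) // trF γ = c}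
      = Nat.card {γ : SpecialLinearGroup (Fin 2) (ZMod p) // trF γ = -c} := by
  obtain ⟨x, y, hxy⟩ := ZMod.sq_add_sq p (-1)
  obtain ⟨g, hg⟩ := exists_transpose_mul_self_eq_neg_one_of_sq_add_sq hxy
  exact card_trF_eq_neg_of_transpose_mul_self_eq_neg_one hg c

theorem stmt_6_general (p : ℕ) [Fact p.Prime]
    (ε ε' : ZMod p) (hε : ε = 1 ∨ ε = -1) (hε' : ε' = 1 ∨ ε' = -1) :
    Nat.card {γ : Matrix.SpecialLinearGroup (Fin 2) (ZMod p) // trF γ = 2 * ε}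
      = Nat.card {γ : Matrix.SpecialLinearGroup (Fin 2) (ZMod p) // trF γ = 2 * ε'} := by
  have hneg : 2 * (-1 : ZMod p) = -(2 * 1) := by ring
  rcases hε with rfl | rfl <;> rcases hε' with rfl | rfl
  · rfl
  · rw [hneg, ← ZMod.card_trF_eq_neg]
  · rw [hneg, ← ZMod.card_trF_eq_neg]
  · rfl

theorem stmt_6 (p : ℕ) (hp : p.Prime) (hodd : p % 2 = 1) [Fact p.Prime]
    (ε ε' : ZMod p) (hε : ε = 1 ∨ ε = -1) (hε' : ε' = 1 ∨ ε' = -1) :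
    Nat.card {γ : Matrix.SpecialLinearGroup (Fin 2) (ZMod p) // trF γ = 2 * ε}
      = Nat.card {γ : Matrix.SpecialLinearGroup (Fin 2) (ZMod p) // trF γ = 2 * ε'} :=
  stmt_6_general p ε ε' hε hε'
end

section
/- For any odd prime p and any ε ∈ {1,−1}, the count #{γ ∈ SL₂(F_p) : tr(γᵀγ) = 2ε} equals #{(x,z) ∈ F_p² : x² + z² = (1+ε)·2⁻¹} · #{(y,w) ∈ F_p² : y² + w² = (ε−1)·2⁻¹}. -/
open Matrix

lemma trF_eq {R : Type*} [CommRing R] (γ : Matrix.SpecialLinearGroup (Fin 2) R) :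
    trF γ = γ.1 0 0 ^ 2 + γ.1 0 1 ^ 2 + γ.1 1 0 ^ 2 + γ.1 1 1 ^ 2 := by
  simp [trF, Matrix.trace, Matrix.mul_apply, Fin.sum_univ_succ]
  ring

theorem stmt_8 (p : ℕ) (hp : p.Prime) (hodd : p % 2 = 1) [Fact p.Prime]
    (ε : ZMod p) (hε : ε = 1 ∨ ε = -1) :
    Nat.card {γ : Matrix.SpecialLinearGroup (Fin 2) (ZMod p) // trF γ = 2 * ε}
      = (Finset.univ.filter (fun xz : ZMod p × ZMod p =>
            xz.1 ^ 2 + xz.2 ^ 2 = (1 + ε) * (2 : ZMod p)⁻¹)).card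
        * (Finset.univ.filter (fun yw : ZMod p × ZMod p =>
            yw.1 ^ 2 + yw.2 ^ 2 = (ε - 1) * (2 : ZMod p)⁻¹)).card := by
  have h2 : (2 : ZMod p) ≠ 0 := by
    have hp2 : p ≠ 2 := by omega
    intro h
    have := (ZMod.natCast_eq_zero_iff 2 p).mp (by exact_mod_cast h)
    rcases (Nat.Prime.eq_one_or_self_of_dvd hp 2 · ) with h'
    · have := (Nat.prime_dvd_prime_iff_eq hp Nat.prime_two).mp this
      exact hp2 this
  set P1 : ZMod p × ZMod p → Prop :=
    fun xz => xz.1 ^ 2 + xz.2 ^ 2 = (1 + ε) * (2 : ZMod p)⁻¹ with hP1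
  set P2 : ZMod p × ZMod p → Prop :=
    fun yw => yw.1 ^ 2 + yw.2 ^ 2 = (ε - 1) * (2 : ZMod p)⁻¹ with hP2
  have key : Nat.card {γ : Matrix.SpecialLinearGroup (Fin 2) (ZMod p) // trF γ = 2 * ε}
      = Nat.card ({xz // P1 xz} × {yw // P2 yw}) := by
    apply Nat.card_congr
    refine
      { toFun := fun γ =>
          ⟨⟨(2⁻¹ * (γ.1.1 0 0 + γ.1.1 1 1), 2⁻¹ * (γ.1.1 0 1 - γ.1.1 1 0)), ?_⟩,
           ⟨(2⁻¹ * (γ.1.1 0 0 - γ.1.1 1 1), 2⁻¹ * (γ.1.1 0 1 + γ.1.1 1 0)), ?_⟩⟩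
        invFun := fun q =>
          ⟨⟨!![q.1.1.1 + q.2.1.1, q.2.1.2 + q.1.1.2;
               q.2.1.2 - q.1.1.2, q.1.1.1 - q.2.1.1], ?_⟩, ?_⟩
        left_inv := ?_
        right_inv := ?_ }
    · obtain ⟨γ, hγ⟩ := γ
      have hdet : γ.1 0 0 * γ.1 1 1 - γ.1 0 1 * γ.1 1 0 = 1 := by
        have := γ.2
        rwa [Matrix.det_fin_two] at this
      have htr := hγ
      rw [trF_eq] at htr
      simp only [hP1]
      field_simp
      linear_combination htr + 2 * hdet
    · obtain ⟨γ, hγ⟩ := γ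
      have hdet : γ.1 0 0 * γ.1 1 1 - γ.1 0 1 * γ.1 1 0 = 1 := by
        have := γ.2
        rwa [Matrix.det_fin_two] at this
      have htr := hγ
      rw [trF_eq] at htr
      simp only [hP2]
      field_simp
      linear_combination htr - 2 * hdet
    · obtain ⟨⟨⟨x, z⟩, h1⟩, ⟨⟨y, w⟩, h2'⟩⟩ := q
      simp only [hP1] at h1
      simp only [hP2] at h2'
      rw [Matrix.det_fin_two_of]
      apply mul_left_cancel₀ h2
      field_simp at h1 h2'
      linear_combination h1 - h2'
    · obtain ⟨⟨⟨x, z⟩, h1⟩, ⟨⟨y, w⟩, h2'⟩⟩ := q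
      simp only [hP1] at h1
      simp only [hP2] at h2'
      refine (trF_eq _).trans ?_
      simp only [Matrix.of_apply, Matrix.cons_val', Matrix.cons_val_zero, Matrix.cons_val_one,
        Matrix.head_cons, Matrix.empty_val', Matrix.cons_val_fin_one, Matrix.head_fin_const]
      field_simp at h1 h2' ⊢
      linear_combination h1 + h2'
    · rintro ⟨γ, hγ⟩
      ext i j
      fin_cases i <;> fin_cases j <;>
        · simp
          field_simp
          ring
    · rintro ⟨⟨⟨x, z⟩, h1⟩, ⟨⟨y, w⟩, h2'⟩⟩
      simp only [Prod.mk.injEq, Subtype.mk.injEq]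
      refine ⟨⟨?_, ?_⟩, ?_, ?_⟩ <;>
        · simp
          field_simp
          ring
  rw [key, Nat.card_prod, Nat.card_eq_fintype_card, Nat.card_eq_fintype_card,
    Fintype.card_subtype, Fintype.card_subtype]
end

section
/- The number of integer solutions (x,y,z,w) ∈ ℤ⁴ to the simultaneous equations x² − y² + z² − w² = 1 and 2(x² + y² + z² + w²) = t is O(t^ε) for every ε > 0. -/
/-!
Adding and subtracting the two equations gives `4 (x² + z²) = t + 2` and `4 (y² + w²) = t - 2`,
so a solution is a pair of Gaussian integers `x + iz`, `y + iw` of norms `(t + 2) / 4` and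
`(t - 2) / 4`. A Gaussian integer `w` of norm `n` divides `n = w * conj w`, so it suffices to
bound the number of divisors of `z` in `ℤ[i]`. Up to units these correspond to the exponent
vectors `≤ (v_π z)_π`, so there are at most `#ℤ[i]ˣ * ∏_π (v_π z + 1)` of them, and the usual
divisor-bound argument gives `v + 1 ≤ c_ε (N π ^ ε) ^ v` for every prime, with `c_ε = 1` as soon
as `N π ^ ε ≥ 2`, which excludes only finitely many primes. Hence the count is `≪ N(z) ^ ε`.
-/

open Finset UniqueFactorizationMonoid

local notation "ℤ[i]" => GaussianInt

theorem natCast_add_one_le_rpow_pow {ε N : ℝ} (hN : 2 ≤ N ^ ε) (a : ℕ) :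
    (a + 1 : ℝ) ≤ (N ^ ε) ^ a :=
  calc (a + 1 : ℝ) ≤ 2 ^ a := by exact_mod_cast Nat.lt_two_pow_self
    _ ≤ (N ^ ε) ^ a := pow_le_pow_left₀ zero_le_two hN a

theorem exists_natCast_add_one_le_mul_rpow_pow {ε : ℝ} (hε : 0 < ε) :
    ∃ c : ℝ, 1 ≤ c ∧ ∀ (a : ℕ) {N : ℝ}, 2 ≤ N → (a + 1 : ℝ) ≤ c * (N ^ ε) ^ a := by
  have hq : 0 < (2 : ℝ) ^ ε - 1 := sub_pos.mpr (Real.one_lt_rpow one_lt_two hε)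
  refine ⟨max 1 ((2 ^ ε - 1)⁻¹), le_max_left _ _, fun a N hN => ?_⟩
  set c := max 1 ((2 ^ ε - 1 : ℝ)⁻¹)
  have hc : 1 ≤ c * (2 ^ ε - 1) := by
    rw [← inv_le_iff_one_le_mul₀ hq]
    exact le_max_right _ _
  have hbern : 1 + a * (2 ^ ε - 1) ≤ ((2 : ℝ) ^ ε) ^ a := by
    simpa using one_add_mul_le_pow (by linarith : (-2 : ℝ) ≤ 2 ^ ε - 1) a
  calc (a + 1 : ℝ) ≤ c * (1 + a * (2 ^ ε - 1)) := by
        nlinarith [le_max_left 1 ((2 ^ ε - 1 : ℝ)⁻¹), (Nat.cast_nonneg a : (0 : ℝ) ≤ a)]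
    _ ≤ c * ((2 : ℝ) ^ ε) ^ a := by gcongr
    _ ≤ c * (N ^ ε) ^ a := by gcongr

theorem exists_prod_natCast_add_one_le_mul_prod {ε : ℝ} (hε : 0 < ε) :
    ∃ c : ℝ, 1 ≤ c ∧ ∀ {ι : Type*} (s : Finset ι) (a : ι → ℕ) (N : ι → ℝ),
      (∀ i ∈ s, 2 ≤ N i) →
        ∏ i ∈ s, (a i + 1 : ℝ) ≤ c ^ #{i ∈ s | N i ^ ε < 2} * ∏ i ∈ s, (N i ^ ε) ^ a i := by
  obtain ⟨c, hc, hbound⟩ := exists_natCast_add_one_le_mul_rpow_pow hε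
  refine ⟨c, hc, fun s a N hN => ?_⟩
  classical
  calc ∏ i ∈ s, (a i + 1 : ℝ)
      ≤ ∏ i ∈ s, (if N i ^ ε < 2 then c else 1) * (N i ^ ε) ^ a i := by
        refine prod_le_prod (fun i _ => by positivity) fun i hi => ?_
        split_ifs with h
        · exact hbound (a i) (hN i hi)
        · rw [one_mul]
          exact natCast_add_one_le_rpow_pow (not_lt.mp h) (a i)
    _ = c ^ #{i ∈ s | N i ^ ε < 2} * ∏ i ∈ s, (N i ^ ε) ^ a i := by
        rw [prod_mul_distrib, prod_ite, prod_const, prod_const_one, mul_one]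

theorem UniqueFactorizationMonoid.card_subtype_dvd_le {α : Type*} [CommMonoidWithZero α]
    [NormalizationMonoid α] [UniqueFactorizationMonoid α] [DecidableEq α] [Finite αˣ]
    {z : α} (hz : z ≠ 0) :
    Nat.card {δ // δ ∣ z} ≤
      Nat.card αˣ * ∏ π ∈ (normalizedFactors z).toFinset, ((normalizedFactors z).count π + 1) := by
  have hne : ∀ δ : {δ // δ ∣ z}, (δ : α) ≠ 0 := fun δ h0 => hz (zero_dvd_iff.mp (h0 ▸ δ.2))
  let f : {δ // δ ∣ z} → αˣ × Iic (normalizedFactors z) := fun δ =>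
    (normUnit (δ : α), ⟨normalizedFactors (δ : α), mem_Iic.mpr
      ((dvd_iff_normalizedFactors_le_normalizedFactors (hne δ) hz).mp δ.2)⟩)
  have hf : Function.Injective f := by
    rintro δ δ' h
    simp only [f, Prod.mk.injEq, Subtype.mk.injEq] at h
    have hassoc : Associated (δ : α) δ' :=
      (associated_iff_normalizedFactors_eq_normalizedFactors (hne δ) (hne δ')).mpr h.2
    have hnorm : normalize (δ : α) = normalize (δ' : α) := normalize_eq_normalize_iff.mpr
      ⟨hassoc.dvd, hassoc.symm.dvd⟩
    have hrecover (x : α) : x = normalize x * ↑(normUnit x)⁻¹ := by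
      rw [normalize_apply, Units.mul_inv_cancel_right]
    exact Subtype.ext (by rw [hrecover δ, hrecover δ', hnorm, h.1])
  calc Nat.card {δ // δ ∣ z} ≤ Nat.card (αˣ × Iic (normalizedFactors z)) :=
        Nat.card_le_card_of_injective f hf
    _ = _ := by rw [Nat.card_prod, Nat.card_eq_fintype_card (α := Iic _), Fintype.card_coe,
        Multiset.card_Iic]

namespace GaussianInt

theorem finite_setOf_norm_le (B : ℤ) : {w : ℤ[i] | w.norm ≤ B}.Finite := by
  refine ((Set.finite_Icc (-B) B).prod (Set.finite_Icc (-B) B)).image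
    (fun p : ℤ × ℤ => (⟨p.1, p.2⟩ : ℤ[i])) |>.subset fun w hw => ⟨(w.re, w.im), ?_, rfl⟩
  have hw : w.re * w.re + w.im * w.im ≤ B := by simpa [Zsqrtd.norm_def] using hw
  simp only [Set.mem_prod, Set.mem_Icc]
  refine ⟨⟨?_, ?_⟩, ?_, ?_⟩ <;> nlinarith [sq_nonneg (w.re + 1), sq_nonneg (w.re - 1),
    sq_nonneg (w.im + 1), sq_nonneg (w.im - 1)]

instance (n : ℤ) : Finite {w : ℤ[i] // w.norm = n} :=
  ((finite_setOf_norm_le n).subset fun _ hw => le_of_eq hw).to_subtype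

instance : Finite ℤ[i]ˣ :=
  have : Finite {w : ℤ[i] // w.norm = 1} := inferInstance
  Finite.of_injective (fun u : ℤ[i]ˣ => (⟨u, (Zsqrtd.norm_eq_one_iff' (by norm_num) _).mpr
    u.isUnit⟩ : {w : ℤ[i] // w.norm = 1})) fun _ _ h => Units.ext (congrArg Subtype.val h)

theorem two_le_norm_of_prime {π : ℤ[i]} (hπ : Prime π) : 2 ≤ π.norm := by
  have h0 : π.norm ≠ 0 := fun h => hπ.ne_zero (norm_eq_zero.mp h)
  have h1 : π.norm ≠ 1 := fun h => hπ.not_isUnit ((Zsqrtd.norm_eq_one_iff' (by norm_num) π).mp h)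
  have := norm_nonneg π
  omega

theorem prod_norm_pow_count_normalizedFactors [NormalizationMonoid ℤ[i]] [DecidableEq ℤ[i]]
    {z : ℤ[i]} (hz : z ≠ 0) :
    ∏ π ∈ (normalizedFactors z).toFinset, π.norm ^ (normalizedFactors z).count π = z.norm := by
  rw [← prod_multiset_map_count]
  exact (map_multiset_prod Zsqrtd.normMonoidHom _).symm.trans <|
    Zsqrtd.norm_eq_of_associated (by norm_num) (prod_normalizedFactors hz)

theorem norm_mk (a b : ℤ) : (⟨a, b⟩ : ℤ[i]).norm = a ^ 2 + b ^ 2 := by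
  rw [Zsqrtd.norm_def]
  ring

theorem exists_card_dvd_le_mul_norm_rpow {ε : ℝ} (hε : 0 < ε) :
    ∃ C : ℝ, 0 < C ∧ ∀ z : ℤ[i], z ≠ 0 → (Nat.card {δ // δ ∣ z} : ℝ) ≤ C * (z.norm : ℝ) ^ ε := by
  obtain ⟨c, hc, hprod⟩ := exists_prod_natCast_add_one_le_mul_prod hε
  set small := (finite_setOf_norm_le ⌊(2 : ℝ) ^ ε⁻¹⌋).toFinset
  have hunits : 0 < Nat.card ℤ[i]ˣ := Nat.card_pos
  refine ⟨Nat.card ℤ[i]ˣ * c ^ #small, by positivity, fun z hz => ?_⟩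
  let : NormalizationMonoid ℤ[i] :=
    UniqueFactorizationMonoid.strongNormalizationMonoid.toNormalizationMonoid
  classical
  set F := normalizedFactors z
  have hN (w : ℤ[i]) : (0 : ℝ) ≤ w.norm := Int.cast_nonneg_iff.mpr (norm_nonneg w)
  have hprime (π) (hπ : π ∈ F.toFinset) : (2 : ℝ) ≤ π.norm := by
    exact_mod_cast two_le_norm_of_prime (prime_of_normalized_factor π (Multiset.mem_toFinset.mp hπ))
  have hsmall : #{π ∈ F.toFinset | (π.norm : ℝ) ^ ε < 2} ≤ #small := by
    refine card_le_card fun π hπ => ?_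
    rw [mem_filter] at hπ
    rw [Set.Finite.mem_toFinset]
    exact Int.le_floor.mpr ((Real.lt_rpow_inv_iff_of_pos (hN π) zero_le_two hε).mpr
      hπ.2).le
  have hnorm : ∏ π ∈ F.toFinset, ((π.norm : ℝ) ^ ε) ^ F.count π = (z.norm : ℝ) ^ ε := by
    rw [prod_congr rfl fun π _ => Real.rpow_pow_comm (hN π) _ _,
      Real.finsetProd_rpow _ _ fun π _ => pow_nonneg (hN π) _]
    exact_mod_cast congrArg (fun n : ℤ => (n : ℝ) ^ ε) (prod_norm_pow_count_normalizedFactors hz)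
  calc (Nat.card {δ // δ ∣ z} : ℝ)
      ≤ Nat.card ℤ[i]ˣ * ∏ π ∈ F.toFinset, (F.count π + 1 : ℝ) := by
        exact_mod_cast card_subtype_dvd_le hz
    _ ≤ Nat.card ℤ[i]ˣ * (c ^ #small * (z.norm : ℝ) ^ ε) := by
        gcongr
        refine (hprod _ _ _ hprime).trans ?_
        rw [hnorm]
        exact mul_le_mul_of_nonneg_right (pow_le_pow_right₀ hc hsmall)
          (Real.rpow_nonneg (hN z) ε)
    _ = Nat.card ℤ[i]ˣ * c ^ #small * (z.norm : ℝ) ^ ε := by ring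

theorem exists_card_norm_eq_le {ε : ℝ} (hε : 0 < ε) :
    ∃ C : ℝ, 0 < C ∧ ∀ n : ℕ,
      (Nat.card {w : ℤ[i] // w.norm = n} : ℝ) ≤ C * ((n : ℝ) + 1) ^ ε := by
  obtain ⟨C, hC, hdvd⟩ := exists_card_dvd_le_mul_norm_rpow (half_pos hε)
  refine ⟨max 1 C, by positivity, fun n => ?_⟩
  rcases Nat.eq_zero_or_pos n with rfl | hn
  · simp
  have hn0 : (n : ℤ[i]) ≠ 0 := by exact_mod_cast hn.ne'
  have := Fintype.ofFinite ℤ[i]ˣ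
  have := fintypeSubtypeDvd _ hn0
  let f : {w : ℤ[i] // w.norm = n} → {δ // δ ∣ (n : ℤ[i])} := fun w =>
    ⟨w, ⟨star w, by rw [← Zsqrtd.norm_eq_mul_conj, w.2, Int.cast_natCast]⟩⟩
  have hf : Function.Injective f := fun w w' h => Subtype.ext (Subtype.mk.inj h)
  calc (Nat.card {w : ℤ[i] // w.norm = n} : ℝ) ≤ Nat.card {δ // δ ∣ (n : ℤ[i])} := by
        exact_mod_cast Nat.card_le_card_of_injective f hf
    _ ≤ C * (((n : ℤ[i]).norm : ℤ) : ℝ) ^ (ε / 2) := hdvd _ hn0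
    _ = C * (n : ℝ) ^ ε := by
        rw [Zsqrtd.norm_natCast]
        push_cast
        rw [Real.mul_rpow (Nat.cast_nonneg n) (Nat.cast_nonneg n), ← Real.rpow_add
          (Nat.cast_pos.mpr hn), add_halves]
    _ ≤ max 1 C * ((n : ℝ) + 1) ^ ε := by
        gcongr
        · exact le_max_right _ _
        · linarith

end GaussianInt

theorem card_solutions_le_card_norm_eq_mul (t : ℕ) :
    Nat.card {v : ℤ × ℤ × ℤ × ℤ //
        v.1 ^ 2 - v.2.1 ^ 2 + v.2.2.1 ^ 2 - v.2.2.2 ^ 2 = 1 ∧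
        2 * (v.1 ^ 2 + v.2.1 ^ 2 + v.2.2.1 ^ 2 + v.2.2.2 ^ 2) = (t : ℤ)} ≤
      Nat.card {w : ℤ[i] // w.norm = ((t + 2) / 4 : ℕ)} *
        Nat.card {w : ℤ[i] // w.norm = ((t - 2) / 4 : ℕ)} := by
  rw [← Nat.card_prod]
  refine Nat.card_le_card_of_injective (fun v => (⟨⟨v.1.1, v.1.2.2.1⟩, ?_⟩,
    ⟨⟨v.1.2.1, v.1.2.2.2⟩, ?_⟩)) fun v v' h => ?_
  · rw [GaussianInt.norm_mk]; have := v.2; omega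
  · rw [GaussianInt.norm_mk]; have := v.2; omega
  · simp only [Prod.mk.injEq, Subtype.mk.injEq, Zsqrtd.mk.injEq] at h
    exact Subtype.ext (Prod.ext h.1.1 (Prod.ext h.2.1 (Prod.ext h.1.2 h.2.2)))

theorem stmt_17 :
    ∀ ε : ℝ, 0 < ε → ∃ C : ℝ, 0 < C ∧ ∀ t : ℕ, 1 ≤ t →
      (Nat.card {v : ℤ × ℤ × ℤ × ℤ //
          v.1 ^ 2 - v.2.1 ^ 2 + v.2.2.1 ^ 2 - v.2.2.2 ^ 2 = 1 ∧
          2 * (v.1 ^ 2 + v.2.1 ^ 2 + v.2.2.1 ^ 2 + v.2.2.2 ^ 2) = (t : ℤ)} : ℝ)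
        ≤ C * (t : ℝ) ^ ε := by
  intro ε hε
  obtain ⟨C, hC, hcard⟩ := GaussianInt.exists_card_norm_eq_le (half_pos hε)
  refine ⟨C ^ 2, by positivity, fun t ht => ?_⟩
  calc _ ≤ (Nat.card {w : ℤ[i] // w.norm = ((t + 2) / 4 : ℕ)} : ℝ) *
        Nat.card {w : ℤ[i] // w.norm = ((t - 2) / 4 : ℕ)} := by
        exact_mod_cast card_solutions_le_card_norm_eq_mul t
    _ ≤ (C * (t : ℝ) ^ (ε / 2)) * (C * (t : ℝ) ^ (ε / 2)) := by
        gcongr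
        · exact (hcard _).trans (by gcongr; exact_mod_cast (by omega : (t + 2) / 4 + 1 ≤ t))
        · exact (hcard _).trans (by gcongr; exact_mod_cast (by omega : (t - 2) / 4 + 1 ≤ t))
    _ = C ^ 2 * (t : ℝ) ^ ε := by
        rw [mul_mul_mul_comm, ← Real.rpow_add (by positivity), add_halves, sq]
end
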